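/- Let D be the derivation on ℤ[y,z] with D(y) = yz and D(z) = y². Then for all n ≥ 1, D^n(z) = Σ_{k=0}^{⌊(n-1)/2⌋} W(n,k)·y^{2k+2}·z^{n-2k-1}, where W(n,k) is the number of permutations of [n] with k interior peaks. -/

import Mathlib

open Finset Polynomial

/-- `pval π i` is the value `π(i+1)` of the permutation in one-based value convention
(values `1,…,n`), and `0` for indices out of range. -/
def pval {n : ℕ} (π : Equiv.Perm (Fin n)) (i : ℕ) : ℕ :=
  if h : i < n then (π ⟨i, h⟩ : ℕ) + 1 else 0

/-- number of interior peaks of `π` -/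
def intPeaks {n : ℕ} (π : Equiv.Perm (Fin n)) : ℕ :=
  ((Finset.Ioo 0 (n - 1)).filter (fun i =>
    pval π (i-1) < pval π i ∧ pval π (i+1) < pval π i)).card

/-- `W(n,k)`: the number of permutations of `[n]` with `k` interior peaks -/
def peakNum (n k : ℕ) : ℕ :=
  (Finset.univ.filter (fun π : Equiv.Perm (Fin n) => intPeaks π = k)).card

/-!
Insert the new largest letter into a permutation of `[n]` that has `k` interior peaks. Placed at
either end or directly beside one of the peaks (`2k + 2` slots), it creates no new peak: a peak
that it becomes adjacent to disappears and reappears at the new letter. In any of the other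
`n - 2k - 1` slots it adds exactly one peak. This gives
`W(n+1, k) = (2k+2) W(n, k) + (n - 2k + 1) W(n, k-1)`, and this is also the recurrence for the
coefficients of `Dⁿ(z)`, because `D (yᵃ zᵇ) = a yᵃ zᵇ⁺¹ + b yᵃ⁺² zᵇ⁻¹`.
-/

-- A word of length `n` is a function `ℕ → ℕ` read at the positions `0, …, n - 1`.
def peaks (w : ℕ → ℕ) (n : ℕ) : Finset ℕ :=
  (Ioo 0 (n - 1)).filter fun i => w (i - 1) < w i ∧ w (i + 1) < w i

def insertAt (w : ℕ → ℕ) (p M : ℕ) (i : ℕ) : ℕ :=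
  if i < p then w i else if i = p then M else w (i - 1)

def neutralSlots (w : ℕ → ℕ) (n : ℕ) : Finset ℕ :=
  insert 0 (insert n (peaks w n ∪ (peaks w n).image (· + 1)))

section insertAt

variable {w : ℕ → ℕ} {p M i : ℕ}

lemma insertAt_of_lt (h : i < p) : insertAt w p M i = w i := if_pos h

lemma insertAt_self : insertAt w p M p = M := by simp [insertAt]

lemma insertAt_of_gt (h : p < i) : insertAt w p M i = w (i - 1) := by
  simp [insertAt, h.not_gt, h.ne']

end insertAt

section peaks

variable {w : ℕ → ℕ} {n i : ℕ}

lemma mem_peaks :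
    i ∈ peaks w n ↔ 0 < i ∧ i < n - 1 ∧ w (i - 1) < w i ∧ w (i + 1) < w i := by
  simp [peaks, and_assoc]

lemma succ_notMem_peaks (h : i ∈ peaks w n) : i + 1 ∉ peaks w n := by
  simp only [mem_peaks, Nat.add_sub_cancel] at *
  omega

lemma mem_neutralSlots {p : ℕ} :
    p ∈ neutralSlots w n ↔
      p = 0 ∨ p = n ∨ p ∈ peaks w n ∨ ∃ i ∈ peaks w n, i + 1 = p := by
  simp [neutralSlots]

lemma neutralSlots_subset_range : neutralSlots w n ⊆ range (n + 1) := by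
  intro p hp
  rw [mem_neutralSlots] at hp
  rcases hp with rfl | rfl | hp | ⟨i, hi, rfl⟩ <;>
    simp only [mem_peaks, mem_range] at * <;> omega

lemma card_neutralSlots (hn : 1 ≤ n) : #(neutralSlots w n) = 2 * #(peaks w n) + 2 := by
  have hdisj : Disjoint (peaks w n) ((peaks w n).image (· + 1)) := by
    simp only [disjoint_left, mem_image, not_exists, not_and]
    rintro _ hi i hi' rfl
    exact succ_notMem_peaks hi' hi
  rw [neutralSlots, card_insert_of_notMem, card_insert_of_notMem, card_union_of_disjoint hdisj,
    card_image_of_injective _ (add_left_injective 1)]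
  · ring
  all_goals
    simp only [mem_insert, mem_union, mem_image, mem_peaks, not_or, not_exists, not_and]
    grind

lemma two_mul_card_peaks_le : 2 * #(peaks w n) ≤ n - 1 := by
  rcases Nat.eq_zero_or_pos n with rfl | hn
  · simp [peaks]
  · have := card_le_card (neutralSlots_subset_range (w := w) (n := n))
    rw [card_neutralSlots hn, card_range] at this
    omega

lemma mem_peaks_insertAt {p M : ℕ} (hp : p ≤ n) (hM : ∀ j, w j < M) :
    i ∈ peaks (insertAt w p M) (n + 1) ↔
      (i + 1 < p ∧ i ∈ peaks w n) ∨ (i = p ∧ 0 < p ∧ p < n) ∨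
        (p + 1 < i ∧ i - 1 ∈ peaks w n) := by
  simp only [mem_peaks, insertAt]
  grind

lemma peaks_insertAt {p M : ℕ} (hp : p ≤ n) (hM : ∀ j, w j < M) :
    peaks (insertAt w p M) (n + 1) =
      ((peaks w n).filter fun i => ¬(i = p ∨ i + 1 = p)).image
          (fun i => if i < p then i else i + 1)
        ∪ (Ioo 0 n).filter (· = p) := by
  ext i
  simp only [mem_peaks_insertAt hp hM, mem_union, mem_image, mem_filter, mem_Ioo]
  grind

lemma card_filter_adjacent_peaks_le_one {p : ℕ} :
    #((peaks w n).filter fun i => i = p ∨ i + 1 = p) ≤ 1 := by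
  refine card_le_one.2 fun a ha b hb => ?_
  simp only [mem_filter] at ha hb
  rcases ha with ⟨ha, rfl | rfl⟩ <;> rcases hb with ⟨hb, hab | hab⟩
  · exact hab.symm
  · exact absurd (hab ▸ ha) (succ_notMem_peaks hb)
  · exact absurd (hab ▸ hb) (succ_notMem_peaks ha)
  · omega

lemma card_peaks_insertAt_add {p M : ℕ} (hp : p ≤ n) (hM : ∀ j, w j < M) :
    #(peaks (insertAt w p M) (n + 1)) + #((peaks w n).filter fun i => i = p ∨ i + 1 = p) =
      #(peaks w n) + if 0 < p ∧ p < n then 1 else 0 := by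
  rw [peaks_insertAt hp hM, card_union_of_disjoint, card_image_of_injOn, filter_eq',
    ← card_filter_add_card_filter_not (s := peaks w n) (p := fun i => i = p ∨ i + 1 = p)]
  · simp only [mem_Ioo, apply_ite card, card_singleton, card_empty]
    omega
  · intro a _ b _ hab
    simp only at hab
    split_ifs at hab <;> omega
  · simp only [disjoint_left, mem_image, mem_filter, not_and]
    rintro _ ⟨i, ⟨_, hi⟩, rfl⟩ _ h
    split_ifs at h <;> omega

lemma card_peaks_insertAt {p M : ℕ} (hp : p ≤ n) (hM : ∀ j, w j < M) :
    #(peaks (insertAt w p M) (n + 1)) =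
      #(peaks w n) + if p ∈ neutralSlots w n then 0 else 1 := by
  have hcard := card_peaks_insertAt_add hp hM
  simp only [mem_neutralSlots]
  rcases ((peaks w n).filter fun i => i = p ∨ i + 1 = p).eq_empty_or_nonempty
    with h0 | ⟨i, hi⟩
  · rw [h0, card_empty, add_zero] at hcard
    have hfar : p ∉ peaks w n ∧ ¬∃ i ∈ peaks w n, i + 1 = p := by
      simp only [filter_eq_empty_iff, not_or] at h0
      exact ⟨fun hp => (h0 hp).1 rfl, fun ⟨i, hi, hip⟩ => (h0 hi).2 hip⟩
    rw [hcard]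
    split_ifs <;> simp only [hfar, or_false] at * <;> omega
  · have hone := le_antisymm card_filter_adjacent_peaks_le_one (card_pos.2 ⟨i, hi⟩)
    obtain ⟨hpeak, hip⟩ := mem_filter.1 hi
    have hinner : 0 < p ∧ p < n := by rw [mem_peaks] at hpeak; omega
    rw [if_pos hinner, hone] at hcard
    rw [if_pos (by rcases hip with rfl | rfl <;> simp [hpeak])]
    omega

end peaks

def insertMax {n : ℕ} (π : Equiv.Perm (Fin n)) (p : Fin (n + 1)) : Equiv.Perm (Fin (n + 1)) :=
  (finSuccEquiv' p).trans ((Equiv.optionCongr π).trans (finSuccEquiv' (Fin.last n)).symm)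

section insertMax

variable {n : ℕ} (π : Equiv.Perm (Fin n)) (p : Fin (n + 1))

lemma insertMax_self : insertMax π p p = Fin.last n := by
  simp [insertMax, finSuccEquiv'_symm_none]

lemma insertMax_succAbove (j : Fin n) : insertMax π p (p.succAbove j) = (π j).castSucc := by
  simp [insertMax, finSuccEquiv'_symm_some, Fin.succAbove_last]

lemma pval_lt (i : ℕ) : pval π i < n + 1 := by
  unfold pval
  split_ifs <;> omega

lemma pval_insertMax : pval (insertMax π p) = insertAt (pval π) p (n + 1) := by
  funext i
  have hp : (p : ℕ) ≤ n := p.is_le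
  rcases lt_trichotomy i p with h | rfl | h
  · have hi : i < n := by omega
    have : (⟨i, by omega⟩ : Fin (n + 1)) = p.succAbove ⟨i, hi⟩ := by
      rw [Fin.succAbove_of_castSucc_lt _ _ h]; rfl
    simp [pval, insertAt_of_lt h, hi, this, insertMax_succAbove, hi.le]
  · simp [pval, insertAt_self, insertMax_self, hp]
  · rw [insertAt_of_gt h]
    rcases lt_or_ge n i with hn | hn
    · simp [pval, show ¬ i < n + 1 by omega, show ¬ i - 1 < n by omega]
    have hi : i - 1 < n := by omega
    have : (⟨i, by omega⟩ : Fin (n + 1)) = p.succAbove ⟨i - 1, hi⟩ := by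
      rw [Fin.succAbove_of_le_castSucc _ _ (by simp [Fin.le_def]; omega)]
      ext; simp; omega
    simp [pval, show i < n + 1 by omega, hi, this, insertMax_succAbove]

lemma intPeaks_eq_card_peaks : intPeaks π = #(peaks (pval π) n) := rfl

lemma intPeaks_insertMax :
    intPeaks (insertMax π p) =
      intPeaks π + if ↑p ∈ neutralSlots (pval π) n then 0 else 1 := by
  rw [intPeaks_eq_card_peaks, intPeaks_eq_card_peaks, pval_insertMax,
    card_peaks_insertAt p.is_le (pval_lt π)]

end insertMax

lemma insertMax_bijective {n : ℕ} :
    Function.Bijective fun x : Equiv.Perm (Fin n) × Fin (n + 1) => insertMax x.1 x.2 := by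
  rw [Fintype.bijective_iff_injective_and_card]
  refine ⟨fun ⟨π, p⟩ ⟨π', p'⟩ h => ?_,
    by simp [Fintype.card_perm, Nat.factorial_succ, mul_comm]⟩
  simp only at h
  obtain rfl : p = p' := (insertMax π p).injective (by rw [insertMax_self, h, insertMax_self])
  have : π = π' := Equiv.ext fun j => by
    simpa [insertMax_succAbove] using congr($h (p.succAbove j))
  rw [this]

lemma Fin.card_filter_val_mem {m : ℕ} {S : Finset ℕ} (h : S ⊆ range m) :
    #{i : Fin m | ↑i ∈ S} = #S := by
  refine card_nbij (↑) (fun i hi => by simpa using hi) Fin.val_injective.injOn fun x hx => ?_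
  exact ⟨⟨x, mem_range.1 (h hx)⟩, by simpa using hx, rfl⟩

lemma card_filter_intPeaks_insertMax {n : ℕ} (hn : 1 ≤ n) (π : Equiv.Perm (Fin n)) (k : ℕ) :
    #{p : Fin (n + 1) | intPeaks (insertMax π p) = k} =
      (if intPeaks π = k then 2 * k + 2 else 0) +
        if intPeaks π + 1 = k then n + 1 - 2 * k else 0 := by
  have hB : #{p : Fin (n + 1) | ↑p ∈ neutralSlots (pval π) n} = 2 * intPeaks π + 2 := by
    rw [Fin.card_filter_val_mem neutralSlots_subset_range, card_neutralSlots hn,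
      intPeaks_eq_card_peaks]
  have hBc := card_filter_add_card_filter_not (s := univ)
    (p := fun p : Fin (n + 1) => ↑p ∈ neutralSlots (pval π) n)
  rw [card_univ, Fintype.card_fin] at hBc
  simp only [intPeaks_insertMax]
  split_ifs with h1 h2 h2
  · omega
  · subst h1
    simpa only [Nat.add_eq_left, ite_eq_left_iff, one_ne_zero, imp_false, Decidable.not_not,
      add_zero] using hB
  · subst h2
    simp only [Nat.add_left_cancel_iff, ite_eq_right_iff, zero_ne_one, imp_false, zero_add]
    omega
  · refine card_eq_zero.2 (filter_eq_empty_iff.2 fun p _ => ?_)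
    split_ifs <;> omega

lemma peakNum_succ_eq {n : ℕ} (hn : 1 ≤ n) (k : ℕ) :
    peakNum (n + 1) k = (2 * k + 2) * peakNum n k +
      (n + 1 - 2 * k) * #{π : Equiv.Perm (Fin n) | intPeaks π + 1 = k} := by
  have hbij := card_equiv (Equiv.ofBijective _ insertMax_bijective)
    (s := {x : Equiv.Perm (Fin n) × Fin (n + 1) | intPeaks (insertMax x.1 x.2) = k})
    (t := {σ | intPeaks σ = k}) (by simp)
  rw [peakNum, ← hbij, card_filter, Fintype.sum_prod_type]
  simp only [← card_filter, card_filter_intPeaks_insertMax hn, sum_add_distrib]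
  simp only [← sum_filter, sum_const, smul_eq_mul, peakNum]
  ring

lemma peakNum_succ_zero {n : ℕ} (hn : 1 ≤ n) : peakNum (n + 1) 0 = 2 * peakNum n 0 := by
  simp [peakNum_succ_eq hn]

lemma peakNum_succ_succ {n : ℕ} (hn : 1 ≤ n) (k : ℕ) :
    peakNum (n + 1) (k + 1) = (2 * k + 4) * peakNum n (k + 1) + (n - 2 * k - 1) * peakNum n k := by
  rw [peakNum_succ_eq hn, show n + 1 - 2 * (k + 1) = n - 2 * k - 1 by omega]
  simp only [Nat.add_right_cancel_iff, ← peakNum.eq_1]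
  ring

lemma peakNum_eq_zero {n k : ℕ} (h : n - 1 < 2 * k) : peakNum n k = 0 := by
  refine card_eq_zero.2 (filter_eq_empty_iff.2 fun π _ hπ => ?_)
  have := two_mul_card_peaks_le (w := pval π) (n := n)
  rw [← intPeaks_eq_card_peaks, hπ] at this
  omega

section Derivation

variable {R A : Type*} [CommSemiring R] [CommSemiring A] [Algebra R A] (D : Derivation R A A)
  {y z : A}

lemma derivation_pow_mul_pow (hy : D y = y * z) (hz : D z = y ^ 2) (a b : ℕ) :
    D (y ^ a * z ^ b) = a * (y ^ a * z ^ (b + 1)) + b * (y ^ (a + 2) * z ^ (b - 1)) := by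
  rw [Derivation.leibniz, D.leibniz_pow, D.leibniz_pow, hy, hz]
  rcases a with _ | a <;> simp only [smul_eq_mul, nsmul_eq_mul, Nat.add_sub_cancel] <;> ring

lemma derivation_peakNum_term (hy : D y = y * z) (hz : D z = y ^ 2) {n : ℕ} (hn : 1 ≤ n)
    (k : ℕ) :
    D ((peakNum n k : A) * y ^ (2 * k + 2) * z ^ (n - 2 * k - 1)) =
      ((2 * k + 2) * peakNum n k : ℕ) * y ^ (2 * k + 2) * z ^ (n - 2 * k) +
        ((n - 2 * k - 1) * peakNum n k : ℕ) * y ^ (2 * k + 4) * z ^ (n - 2 * k - 2) := by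
  rcases lt_or_ge (n - 1) (2 * k) with h | h
  · simp [peakNum_eq_zero h]
  rw [mul_assoc, Derivation.leibniz, D.map_natCast, smul_zero, add_zero, smul_eq_mul,
    derivation_pow_mul_pow D hy hz, show n - 2 * k - 1 + 1 = n - 2 * k by omega,
    show n - 2 * k - 1 - 1 = n - 2 * k - 2 by omega]
  push_cast
  ring

theorem iterate_derivation_eq_sum_peakNum (hy : D y = y * z) (hz : D z = y ^ 2) {n : ℕ}
    (hn : 1 ≤ n) :
    D^[n] z =
      ∑ k ∈ range (n + 1), (peakNum n k : A) * y ^ (2 * k + 2) * z ^ (n - 2 * k - 1) := by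
  induction n, hn using Nat.le_induction with
  | base =>
    have h10 : peakNum 1 0 = 1 := by decide
    have h11 : peakNum 1 1 = 0 := by decide
    simp [sum_range_succ, h10, h11, hz]
  | succ n hn ih =>
    let f : ℕ → A := fun k =>
      ((2 * k + 2) * peakNum n k : ℕ) * y ^ (2 * k + 2) * z ^ (n - 2 * k)
    let g : ℕ → A := fun k =>
      ((n - 2 * k - 1) * peakNum n k : ℕ) * y ^ (2 * k + 4) * z ^ (n - 2 * k - 2)
    have hf : f (n + 1) = 0 := by
      simp [f, peakNum_eq_zero (show n - 1 < 2 * (n + 1) by omega)]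
    have hstep (k : ℕ) : (peakNum (n + 1) (k + 1) : A) * y ^ (2 * (k + 1) + 2) *
        z ^ (n + 1 - 2 * (k + 1) - 1) = f (k + 1) + g k := by
      simp only [f, g, peakNum_succ_succ hn, show n + 1 - 2 * (k + 1) - 1 = n - 2 * k - 2 by omega,
        show n - 2 * (k + 1) = n - 2 * k - 2 by omega]
      push_cast
      ring
    calc D^[n + 1] z = ∑ k ∈ range (n + 1), f k + ∑ k ∈ range (n + 1), g k := by
          rw [Function.iterate_succ_apply', ih, map_sum, ← sum_add_distrib]
          exact sum_congr rfl fun k _ => derivation_peakNum_term D hy hz hn k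
      _ = ∑ k ∈ range (n + 1), f (k + 1) + f 0 + ∑ k ∈ range (n + 1), g k := by
          rw [← sum_range_succ' f, sum_range_succ f (n + 1), hf, add_zero]
      _ = _ := by
          rw [sum_range_succ' _ (n + 1)]
          simp only [hstep, sum_add_distrib]
          simp only [f, peakNum_succ_zero hn, Nat.cast_mul, Nat.cast_ofNat, mul_zero, zero_add,
            tsub_zero, Nat.add_sub_cancel]
          ring

end Derivation

/-- For the grammar `G = {y → yz, z → y²}` (here `y = X 0`, `z = X 1`):
`Dⁿ(z) = ∑_{k=0}^{⌊(n-1)/2⌋} W(n,k) y^{2k+2} z^{n-2k-1}` for `n ≥ 1`. -/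
theorem stmt13
    (D : Derivation ℤ (MvPolynomial (Fin 2) ℤ) (MvPolynomial (Fin 2) ℤ))
    (hy : D (MvPolynomial.X 0) = MvPolynomial.X 0 * MvPolynomial.X 1)
    (hz : D (MvPolynomial.X 1) = MvPolynomial.X 0 ^ 2) :
    ∀ n : ℕ, 1 ≤ n →
      (⇑D)^[n] (MvPolynomial.X 1)
        = ∑ k ∈ Finset.range ((n-1)/2 + 1),
            (peakNum n k : MvPolynomial (Fin 2) ℤ)
              * MvPolynomial.X 0 ^ (2*k + 2) * MvPolynomial.X 1 ^ (n - 2*k - 1) := by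
  intro n hn
  rw [iterate_derivation_eq_sum_peakNum D hy hz hn]
  refine (sum_subset (range_subset_range.2 (by omega)) fun k _ hk => ?_).symm
  rw [mem_range, not_lt] at hk
  simp [peakNum_eq_zero (show n - 1 < 2 * k by omega)]
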